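/- Let M be a maximal ancestral graph on a finite vertex set O and let T, V_a, V_b be distinct vertices such that the edge between T and V_a has an arrowhead at V_a, the edge between V_b and V_a has an arrowhead at V_a, and T and V_b are not adjacent (i.e., T *→ V_a ←* V_b is a V-structure in M). Then: (i) V_a ∈ MMB(T) and V_b ∈ MMB(T); (ii) no subset of MMB(T) \ {V_a} m-separates T and V_a; (iii) there exists a set S ⊆ MMB(T) \ {V_b} that m-separates T and V_b, and every such S satisfies V_a ∉ S; (iv) no subset of MMB⁺(T) \ {V_a, V_b} m-separates V_a and V_b. -/

import Mathlib

/-- A mixed graph on a vertex type `V`: each pair of distinct vertices carries at most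
one edge, which is either directed (`dir a b` meaning `a → b`) or bidirected
(`bi a b` meaning `a ↔ b`). -/
structure MixedGraph (V : Type*) where
  /-- directed edge `a → b` -/
  dir : V → V → Prop
  /-- bidirected edge `a ↔ b` -/
  bi : V → V → Prop
  bi_symm : ∀ a b, bi a b → bi b a
  dir_irrefl : ∀ a, ¬ dir a a
  bi_irrefl : ∀ a, ¬ bi a a
  not_dir_and_bi : ∀ a b, dir a b → ¬ bi a b
  not_dir_both : ∀ a b, dir a b → ¬ dir b a

namespace MixedGraph

variable {V : Type*} (G : MixedGraph V)

/-- `a` and `b` are adjacent: some edge joins them. -/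
def Adj (a b : V) : Prop := G.dir a b ∨ G.dir b a ∨ G.bi a b

/-- There is an edge between `a` and `b` with an arrowhead at `b`
(i.e. `a → b` or `a ↔ b`). -/
def HeadAt (a b : V) : Prop := G.dir a b ∨ G.bi a b

/-- `a` is an ancestor of `b` (equivalently `b` is a descendant of `a`):
`a = b` or there is a directed path from `a` to `b`. -/
def Anc : V → V → Prop := Relation.ReflTransGen G.dir

/-- A non-endpoint vertex `b` lying between `a` and `c` on a path is a collider if
both incident edges have an arrowhead at `b`. -/
def ColliderAt (a b c : V) : Prop := G.HeadAt a b ∧ G.HeadAt c b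

/-- `p` is a path (a list of pairwise distinct, consecutively adjacent vertices)
from `x` to `y`. -/
def IsPath (p : List V) (x y : V) : Prop :=
  p.Nodup ∧ p.head? = some x ∧ p.getLast? = some y ∧ p.Chain' G.Adj

/-- The path `p` from `x` to `y` is m-connecting relative to `Z`: every
non-collider on `p` is not in `Z` and every collider on `p` has a descendant in `Z`. -/
def MConnecting (Z : Set V) (p : List V) (x y : V) : Prop :=
  G.IsPath p x y ∧
    ∀ a b c : V, [a, b, c] <:+: p →
      (G.ColliderAt a b c → ∃ z ∈ Z, G.Anc b z) ∧
      (¬ G.ColliderAt a b c → b ∉ Z)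

/-- `Z` m-separates `x` and `y` (with `x, y ∉ Z`): no path between `x` and `y` is
m-connecting relative to `Z`. -/
def MSep (x y : V) (Z : Set V) : Prop :=
  x ∉ Z ∧ y ∉ Z ∧ ∀ p : List V, ¬ G.MConnecting Z p x y

/-- An inducing path between `x` and `y`: every non-endpoint vertex is a collider on
the path and is an ancestor of `x` or of `y`. -/
def IsInducingPath (p : List V) (x y : V) : Prop :=
  G.IsPath p x y ∧
    ∀ a b c : V, [a, b, c] <:+: p → G.ColliderAt a b c ∧ (G.Anc b x ∨ G.Anc b y)

/-- A collider path between `x` and `y`: a path with at least one non-endpoint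
vertex, all of whose non-endpoint vertices are colliders. -/
def IsColliderPath (p : List V) (x y : V) : Prop :=
  G.IsPath p x y ∧ 3 ≤ p.length ∧ ∀ a b c : V, [a, b, c] <:+: p → G.ColliderAt a b c

/-- `G` is ancestral: no directed cycle and no almost directed cycle. -/
def Ancestral : Prop :=
  (∀ a b, G.dir a b → ¬ G.Anc b a) ∧ (∀ a b, G.bi a b → ¬ G.Anc a b)

/-- `G` is a maximal ancestral graph: ancestral, and any two non-adjacent vertices
have no inducing path between them. -/
def IsMAG : Prop :=
  G.Ancestral ∧ ∀ x y : V, x ≠ y → ¬ G.Adj x y → ∀ p : List V, ¬ G.IsInducingPath p x y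

/-- The MAG Markov blanket of `T`: all `X ≠ T` such that `T` and `X` are not
m-separated by `O \ {T, X}`. -/
def MMB (T : V) : Set V :=
  {X | X ≠ T ∧ ¬ G.MSep T X (Set.univ \ {T, X})}

/-- `MMB⁺(T) = MMB(T) ∪ {T}`. -/
def MMBplus (T : V) : Set V := G.MMB T ∪ {T}

/-- The induced subgraph of `G` on a set `s` of vertices, keeping all edges of `G`
between vertices of `s`. -/
def induce (s : Set V) : MixedGraph s where
  dir a b := G.dir a b
  bi a b := G.bi a b
  bi_symm a b h := G.bi_symm a b h
  dir_irrefl a := G.dir_irrefl a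
  bi_irrefl a := G.bi_irrefl a
  not_dir_and_bi a b h := G.not_dir_and_bi a b h
  not_dir_both a b h := G.not_dir_both a b h

end MixedGraph


namespace MixedGraph

variable {V : Type*} (G : MixedGraph V)

lemma adj_symm {a b : V} (h : G.Adj a b) : G.Adj b a := by
  rcases h with h | h | h
  · exact Or.inr (Or.inl h)
  · exact Or.inl h
  · exact Or.inr (Or.inr (G.bi_symm _ _ h))

lemma dir_of_not_headAt {a b : V} (hadj : G.Adj a b) (h : ¬ G.HeadAt a b) : G.dir b a := by
  rcases hadj with h1 | h1 | h1
  · exact absurd (Or.inl h1) h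
  · exact h1
  · exact absurd (Or.inr h1) h

lemma colliderAt_symm {a b c : V} (h : G.ColliderAt a b c) : G.ColliderAt c b a := ⟨h.2, h.1⟩

lemma no_triple_two {p : List V} (hl : p.length ≤ 2) {a b c : V} (h : [a,b,c] <:+: p) : False := by
  have := h.length_le
  simp at this
  omega

lemma mid_ne_head {p : List V} (hnd : p.Nodup) {x a b c : V}
    (hh : p.head? = some x) (h : [a,b,c] <:+: p) : b ≠ x := by
  obtain ⟨s, t, rfl⟩ := h
  cases s with
  | nil =>
    simp at hh
    subst hh
    simp at hnd
    tauto
  | cons y s' =>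
    simp at hh
    subst hh
    simp [List.nodup_cons] at hnd
    intro hbx
    subst hbx
    tauto

lemma mid_ne_last {p : List V} (hnd : p.Nodup) {x a b c : V}
    (hh : p.getLast? = some x) (h : [a,b,c] <:+: p) : b ≠ x := by
  have h' : [c,b,a] <:+: p.reverse := by
    have : ([a,b,c].reverse) <:+: p.reverse := List.reverse_infix.mpr h
    simpa using this
  exact mid_ne_head (by simpa using hnd) (by rw [List.head?_reverse]; exact hh) h'

/-- Walk-forward lemma. -/
lemma walk_anc (A : Set V) (hA : ∀ x y, G.dir x y → y ∈ A → x ∈ A)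
    {p : List V} (hchain : p.Chain' G.Adj)
    (hcol : ∀ a b c, [a,b,c] <:+: p → G.ColliderAt a b c → b ∈ A)
    {yend : V} (hlast : p.getLast? = some yend) (hy : yend ∈ A) :
    ∀ (rest : List V) (b c : V), (b :: c :: rest) <:+ p → G.dir b c → b ∈ A := by
  intro rest
  induction rest with
  | nil =>
    intro b c hsuf hd
    obtain ⟨t, rfl⟩ := hsuf
    rw [List.getLast?_append] at hlast
    simp at hlast
    subst hlast
    exact hA _ _ hd hy
  | cons d rest' ih =>
    intro b c hsuf hd
    have htr : [b,c,d] <:+: p := by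
      refine List.IsInfix.trans ?_ hsuf.isInfix
      exact ⟨[], rest', by simp⟩
    by_cases hcd : G.ColliderAt b c d
    · exact hA _ _ hd (hcol _ _ _ htr hcd)
    · have hAdjcd : G.Adj c d := by
        have h2 := hchain.infix htr
        simp only [List.Chain', List.isChain_cons_cons] at h2
        exact h2.2.1
      have hdc : G.dir c d := by
        apply G.dir_of_not_headAt (G.adj_symm hAdjcd)
        intro hh
        exact hcd ⟨Or.inl hd, hh⟩
      have hsuf' : (c :: d :: rest') <:+ p := by
        refine List.IsSuffix.trans ?_ hsuf
        exact ⟨[b], rfl⟩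
      exact hA _ _ hd (ih c d hsuf' hdc)

/-- Every vertex on a path whose colliders lie in a descendant-closed set containing
the endpoints also lies in that set. -/
lemma all_in_anc (A : Set V) (hA : ∀ x y, G.dir x y → y ∈ A → x ∈ A)
    {p : List V} {x y : V} (hp : G.IsPath p x y)
    (hcol : ∀ a b c, [a,b,c] <:+: p → G.ColliderAt a b c → b ∈ A)
    (hx : x ∈ A) (hy : y ∈ A) :
    ∀ a b c, [a,b,c] <:+: p → b ∈ A := by
  obtain ⟨hnd, hh, hl, hchain⟩ := hp
  intro a b c htr
  by_cases hc : G.ColliderAt a b c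
  · exact hcol _ _ _ htr hc
  · rcases (not_and_or.mp hc) with hnab | hncb
    · -- tail at b towards a : walk backwards, i.e. forwards in p.reverse
      obtain ⟨s, t, rfl⟩ := htr
      have hAdj : G.Adj a b := by
        have h2 := hchain.infix (⟨s, t, rfl⟩ : [a,b,c] <:+: _)
        simp only [List.Chain', List.isChain_cons_cons] at h2
        exact h2.1
      have hba : G.dir b a := G.dir_of_not_headAt hAdj hnab
      have hchainr : (s ++ [a,b,c] ++ t).reverse.Chain' G.Adj := by
        rw [List.Chain', List.isChain_reverse]
        exact hchain.imp (fun {u v} h => G.adj_symm h)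
      have hcolr : ∀ u v w, [u,v,w] <:+: (s ++ [a,b,c] ++ t).reverse →
          G.ColliderAt u v w → v ∈ A := by
        intro u v w h hcvw
        have : [w,v,u] <:+: (s ++ [a,b,c] ++ t) := by
          rw [← List.reverse_infix]
          simpa using h
        exact hcol _ _ _ this (G.colliderAt_symm hcvw)
      have hlastr : (s ++ [a,b,c] ++ t).reverse.getLast? = some x := by
        rw [List.getLast?_reverse]
        exact hh
      have hsuf : (b :: a :: s.reverse) <:+ (s ++ [a,b,c] ++ t).reverse := by
        refine ⟨t.reverse ++ [c], ?_⟩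
        simp
      exact G.walk_anc A hA hchainr hcolr hlastr hx s.reverse b a hsuf hba
    · obtain ⟨s, t, rfl⟩ := htr
      have hAdj : G.Adj b c := by
        have h2 := hchain.infix (⟨s, t, rfl⟩ : [a,b,c] <:+: _)
        simp only [List.Chain', List.isChain_cons_cons] at h2
        exact h2.2.1
      have hbc : G.dir b c := G.dir_of_not_headAt (G.adj_symm hAdj) hncb
      have hsuf : (b :: c :: t) <:+ (s ++ [a,b,c] ++ t) := by
        refine ⟨s ++ [a], ?_⟩
        simp
      exact G.walk_anc A hA hchain hcol hl hy t b c hsuf hbc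

/-- A vertex joined to `T` by a path all of whose interior vertices are colliders is
in the Markov blanket of `T`. -/
lemma mem_MMB_of_colliderPath {T v : V} (hvT : v ≠ T) {p : List V}
    (hp : G.IsPath p T v)
    (hcolp : ∀ a b c, [a,b,c] <:+: p → G.ColliderAt a b c) :
    v ∈ G.MMB T := by
  refine ⟨hvT, fun hsep => ?_⟩
  refine hsep.2.2 p ⟨hp, fun a b c htr => ?_⟩
  refine ⟨fun _ => ⟨b, ⟨trivial, ?_⟩, Relation.ReflTransGen.refl⟩,
    fun hn => absurd (hcolp a b c htr) hn⟩
  simp only [Set.mem_insert_iff, Set.mem_singleton_iff]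
  push_neg
  exact ⟨mid_ne_head hp.1 hp.2.1 htr, mid_ne_last hp.1 hp.2.2.1 htr⟩

/-- The key separation lemma: if `T` and `Y` are non-adjacent in a MAG, then the set
of Markov-blanket members of `T` that are ancestors of `T` or `Y` (and differ
from `Y`) m-separates `T` and `Y`. -/
lemma msep_of_not_adj (hG : G.IsMAG) {T Y : V} (hTY : T ≠ Y) (hadj : ¬ G.Adj T Y) :
    G.MSep T Y {v | v ∈ G.MMB T ∧ v ≠ Y ∧ (G.Anc v T ∨ G.Anc v Y)} := by
  classical
  set A : Set V := {v | G.Anc v T ∨ G.Anc v Y} with hAdef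
  have hA : ∀ x y, G.dir x y → y ∈ A → x ∈ A := by
    intro x y hxy hyA
    rcases hyA with h | h
    · exact Or.inl ((Relation.ReflTransGen.single hxy).trans h)
    · exact Or.inr ((Relation.ReflTransGen.single hxy).trans h)
  set S : Set V := {v | v ∈ G.MMB T ∧ v ≠ Y ∧ (G.Anc v T ∨ G.Anc v Y)} with hSdef
  refine ⟨fun hmem => hmem.1.1 rfl, fun hmem => hmem.2.1 rfl, ?_⟩
  rintro p ⟨hp, hmc⟩
  have hcolA : ∀ a b c, [a,b,c] <:+: p → G.ColliderAt a b c → b ∈ A := by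
    intro a b c htr hc
    obtain ⟨z, hzS, hbz⟩ := (hmc a b c htr).1 hc
    rcases hzS.2.2 with h | h
    · exact Or.inl (hbz.trans h)
    · exact Or.inr (hbz.trans h)
  have hTA : T ∈ A := Or.inl Relation.ReflTransGen.refl
  have hYA : Y ∈ A := Or.inr Relation.ReflTransGen.refl
  have hall : ∀ a b c, [a,b,c] <:+: p → b ∈ A :=
    G.all_in_anc A hA hp hcolA hTA hYA
  -- every interior vertex is a collider (else the first non-collider would be in S)
  have hallcol : ∀ a b c, [a,b,c] <:+: p → G.ColliderAt a b c := by
    by_contra hnot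
    push_neg at hnot
    have hP : ∃ n, ∃ s a b c t, s.length = n ∧ p = s ++ [a,b,c] ++ t ∧
        ¬ G.ColliderAt a b c := by
      obtain ⟨a, b, c, ⟨s, t, hst⟩, hnc⟩ := hnot
      exact ⟨s.length, s, a, b, c, t, rfl, hst.symm, hnc⟩
    obtain ⟨s, a, b, c, t, hlen, hps, hnc⟩ := Nat.find_spec hP
    have hmin := fun m (hm : m < Nat.find hP) => Nat.find_min hP hm
    have htr : [a,b,c] <:+: p := ⟨s, t, hps.symm⟩
    have hq : p = (s ++ [a,b]) ++ (c :: t) := by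
      rw [hps]; simp
    have hqcol : ∀ x y z, [x,y,z] <:+: (s ++ [a,b]) → G.ColliderAt x y z := by
      intro x y z hinf
      by_contra hxyz
      obtain ⟨s', t', hst'⟩ := hinf
      have hplen : s'.length < Nat.find hP := by
        have := congrArg List.length hst'
        simp at this
        omega
      exact hmin s'.length hplen ⟨s', x, y, z, t' ++ c :: t, rfl, by
        rw [hq, ← hst']; simp, hxyz⟩
    have hqpath : G.IsPath (s ++ [a,b]) T b := by
      refine ⟨?_, ?_, ?_, ?_⟩
      · have hpre : (s ++ [a,b]) <+: p := ⟨c :: t, hq.symm⟩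
        exact hp.1.sublist hpre.sublist
      · have h0 := hp.2.1
        rw [hq] at h0
        cases s with
        | nil => simpa using h0
        | cons u s' => simpa [List.head?_append] using h0
      · rw [show s ++ [a,b] = (s ++ [a]) ++ [b] by simp, List.getLast?_concat]
      · exact hp.2.2.2.infix ⟨[], c :: t, by rw [hq]; simp⟩
    have hbT : b ≠ T := mid_ne_head hp.1 hp.2.1 htr
    have hbY : b ≠ Y := mid_ne_last hp.1 hp.2.2.1 htr
    have hbS : b ∈ S := ⟨G.mem_MMB_of_colliderPath hbT hqpath hqcol, hbY, hall a b c htr⟩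
    exact (hmc a b c htr).2 hnc hbS
  -- p is an inducing path: contradiction with maximality
  exact hG.2 T Y hTY hadj p ⟨hp, fun a b c htr => ⟨hallcol a b c htr, hall a b c htr⟩⟩

end MixedGraph

/-- properties of a V-structure `T *→ V_a ←* V_b` in a MAG. -/
theorem vstructure_collider_properties {V : Type*} [Fintype V]
    (G : MixedGraph V) (hG : G.IsMAG) (T va vb : V)
    (hTa : T ≠ va) (hTb : T ≠ vb) (hab : va ≠ vb)
    (h1 : G.HeadAt T va) (h2 : G.HeadAt vb va) (h3 : ¬ G.Adj T vb) :
    (va ∈ G.MMB T ∧ vb ∈ G.MMB T) ∧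
    (¬ ∃ S : Set V, S ⊆ G.MMB T \ {va} ∧ G.MSep T va S) ∧
    ((∃ S : Set V, S ⊆ G.MMB T \ {vb} ∧ G.MSep T vb S) ∧
      ∀ S : Set V, S ⊆ G.MMB T \ {vb} → G.MSep T vb S → va ∉ S) ∧
    (¬ ∃ S : Set V, S ⊆ G.MMBplus T \ {va, vb} ∧ G.MSep va vb S) := by
  classical
  have hAdjTa : G.Adj T va := by
    rcases h1 with h | h
    · exact Or.inl h
    · exact Or.inr (Or.inr h)
  have hAdjab : G.Adj va vb := by
    rcases h2 with h | h
    · exact Or.inr (Or.inl h)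
    · exact Or.inr (Or.inr (G.bi_symm _ _ h))
  -- the length-2 path from T to va, m-connecting relative to anything
  have hpath2 : G.IsPath [T, va] T va := by
    refine ⟨by simp [hTa], by simp, by simp, ?_⟩
    simp [List.Chain', hAdjTa]
  have hmc2 : ∀ Z : Set V, G.MConnecting Z [T, va] T va := by
    intro Z
    refine ⟨hpath2, fun a b c htr => absurd htr (fun h => MixedGraph.no_triple_two (by simp) h)⟩
  -- the length-2 path from va to vb
  have hpathab : G.IsPath [va, vb] va vb := by
    refine ⟨by simp [hab], by simp, by simp, ?_⟩
    simp [List.Chain', hAdjab]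
  have hmcab : ∀ Z : Set V, G.MConnecting Z [va, vb] va vb := by
    intro Z
    refine ⟨hpathab, fun a b c htr => absurd htr (fun h => MixedGraph.no_triple_two (by simp) h)⟩
  -- the length-3 path from T to vb through the collider va
  have hpath3 : G.IsPath [T, va, vb] T vb := by
    refine ⟨by simp [hTa, hTb, hab], by simp, by simp, ?_⟩
    simp [List.Chain', hAdjTa, hAdjab]
  have htr3 : ∀ a b c : V, [a,b,c] <:+: [T, va, vb] → a = T ∧ b = va ∧ c = vb := by
    intro a b c htr
    obtain ⟨s, t, hst⟩ := htr
    have hlen := congrArg List.length hst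
    simp at hlen
    have hs : s = [] := by
      have h0 : s.length = 0 := by omega
      exact List.eq_nil_of_length_eq_zero h0
    have ht : t = [] := by
      have h0 : t.length = 0 := by omega
      exact List.eq_nil_of_length_eq_zero h0
    subst hs; subst ht
    simp at hst
    exact ⟨hst.1, hst.2.1, hst.2.2⟩
  have hcol3 : G.ColliderAt T va vb := ⟨h1, h2⟩
  have hmc3 : ∀ Z : Set V, va ∈ Z → G.MConnecting Z [T, va, vb] T vb := by
    intro Z hvaZ
    refine ⟨hpath3, fun a b c htr => ?_⟩
    obtain ⟨ha, hb, hc⟩ := htr3 a b c htr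
    rw [ha, hb, hc]
    exact ⟨fun _ => ⟨va, hvaZ, Relation.ReflTransGen.refl⟩, fun hn => absurd hcol3 hn⟩
  refine ⟨⟨⟨hTa.symm, fun hsep => hsep.2.2 _ (hmc2 _)⟩, ?_⟩, ?_, ⟨?_, ?_⟩, ?_⟩
  · -- vb ∈ MMB T
    refine ⟨hTb.symm, fun hsep => hsep.2.2 _ (hmc3 _ ?_)⟩
    simp [hTa.symm, hab]
  · -- (ii)
    rintro ⟨S, _, hsep⟩
    exact hsep.2.2 _ (hmc2 S)
  · -- (iii) existence
    exact ⟨_, fun v hv => ⟨hv.1, hv.2.1⟩, G.msep_of_not_adj hG hTb h3⟩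
  · -- (iii) va not in any separating set
    intro S _ hsep hvaS
    exact hsep.2.2 _ (hmc3 S hvaS)
  · -- (iv)
    rintro ⟨S, _, hsep⟩
    exact hsep.2.2 _ (hmcab S)
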